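/- arXiv:1012.0989 — 3 statements merged into one kernel-verified Lean document; each statement's English description precedes it below -/
import Mathlib

section
/- Let ω : [0,∞) → [0,∞) be continuous with ω(0) = 0, let Ω ⊂ ℝⁿ be a bounded domain, and let F ∈ L^∞(Ω; ℝᵐ). Let {Ω_j^k}_{1≤j≤k} (k = 1,2,…) be a family of measurable decompositions of Ω such that (a) Ω_i^k ∩ Ω_j^k = ∅ for i ≠ j, (b) ⋃_{1≤j≤k} Ω_j^k = Ω for every k, and (c) lim_{k→∞} max_{1≤j≤k} diam(Ω_j^k) = 0. Then lim_{k→∞} Σ_{ℓ=1}^{k} (1/|Ω_ℓ^k|) ∫_{Ω_ℓ^k} ∫_{Ω_ℓ^k} ω(|F(s) − F(x)|) ds dx = 0. -/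
open MeasureTheory Filter Topology Metric Set
open scoped BoundedContinuousFunction RealInnerProductSpace

noncomputable section

abbrev Euc (n : ℕ) := EuclideanSpace ℝ (Fin n)
abbrev Mat (n : ℕ) := Matrix (Fin n) (Fin n) ℝ

/-- `(Qξ)·η` -/
def matDot {n : ℕ} (Q : Mat n) (ξ η : Euc n) : ℝ := ∑ i, ∑ j, Q i j * ξ j * η i

/-- entrywise magnitude of a matrix, used as the norm `|·|` on matrices -/
def matAbs {n : ℕ} (Q : Mat n) : ℝ := ∑ i, ∑ j, |Q i j|

/-- `M_{Λ,λ}`: symmetric matrices with `λ|ξ|² ≤ Qξ·ξ ≤ Λ|ξ|²` -/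
def MSet (n : ℕ) (L l : ℝ) : Set (Mat n) :=
  {Q | Q.IsSymm ∧ ∀ ξ : Euc n, l * ‖ξ‖ ^ 2 ≤ matDot Q ξ ξ ∧ matDot Q ξ ξ ≤ L * ‖ξ‖ ^ 2}

/-- the unit cube `Z = [0,1]ⁿ` -/
def unitCube (n : ℕ) : Set (Euc n) := {z | ∀ i, z i ∈ Set.Icc (0:ℝ) 1}

/-- the canonical basis of ℝⁿ -/
def eb {n : ℕ} (i : Fin n) : Euc n := EuclideanSpace.single i 1

/-- `Ω` is a bounded domain -/
def IsBoundedDomain {n : ℕ} (Ω : Set (Euc n)) : Prop :=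
  IsOpen Ω ∧ IsConnected Ω ∧ Bornology.IsBounded Ω

/-- `Ω` has a `C²` boundary: near every boundary point, `Ω` is the sublevel set of a `C²`
defining function with nonvanishing gradient. -/
def HasC2Boundary {n : ℕ} (Ω : Set (Euc n)) : Prop :=
  ∀ x ∈ frontier Ω, ∃ (V : Set (Euc n)) (g : Euc n → ℝ),
    IsOpen V ∧ x ∈ V ∧ ContDiffOn ℝ 2 g V ∧ (∀ y ∈ V, gradient g y ≠ 0) ∧
    Ω ∩ V = {y ∈ V | g y < 0}

/-- smooth test functions compactly supported in `Ω` -/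
def IsTest {n : ℕ} (Ω : Set (Euc n)) (φ : Euc n → ℝ) : Prop :=
  ContDiff ℝ (⊤ : ℕ∞) φ ∧ HasCompactSupport φ ∧ tsupport φ ⊆ Ω

/-- membership in `H¹₀(Ω)`, realized as functions on `ℝⁿ` vanishing outside `Ω`
with square integrable (a.e.) gradient -/
def MemH10 {n : ℕ} (Ω : Set (Euc n)) (y : Euc n → ℝ) : Prop :=
  MemLp y 2 (volume.restrict Ω) ∧ MemLp (fun x => gradient y x) 2 (volume.restrict Ω) ∧
    ∀ x ∉ Ω, y x = 0

/-- `y` is a weak solution of `-∇·(B∇y) = f₀ - ∇·F` in `Ω`, `y = 0` on `∂Ω`;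
the right hand sides `f₀ - ∇·F` with `f₀, F ∈ L²` describe exactly `H⁻¹(Ω)`. -/
def WeakSolH {n : ℕ} (Ω : Set (Euc n)) (B : Euc n → Mat n) (f₀ : Euc n → ℝ)
    (F : Euc n → Euc n) (y : Euc n → ℝ) : Prop :=
  MemH10 Ω y ∧ ∀ φ, IsTest Ω φ →
    ∫ x in Ω, matDot (B x) (gradient y x) (gradient φ x) =
      ∫ x in Ω, (f₀ x * φ x + ⟪F x, gradient φ x⟫)

/-- `y` is a weak solution of `-∇·(B∇y) = f` in `Ω`, `y = 0` on `∂Ω`, with `f ∈ L²(Ω)` -/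
def WeakSolRHS {n : ℕ} (Ω : Set (Euc n)) (B : Euc n → Mat n) (f : Euc n → ℝ)
    (y : Euc n → ℝ) : Prop :=
  MemH10 Ω y ∧ ∀ φ, IsTest Ω φ →
    ∫ x in Ω, matDot (B x) (gradient y x) (gradient φ x) = ∫ x in Ω, f x * φ x

/-- weak convergence `y_k ⇀ ȳ` in `H¹₀(Ω)`: boundedness in `H¹` norm together with
convergence of the `H¹` pairings -/
def WeakH10Conv {n : ℕ} (Ω : Set (Euc n)) (y : ℕ → Euc n → ℝ) (ybar : Euc n → ℝ) : Prop :=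
  (∃ C, ∀ k, ∫ x in Ω, ((y k x) ^ 2 + ‖gradient (y k) x‖ ^ 2) ≤ C) ∧
  ∀ φ, MemH10 Ω φ →
    Tendsto (fun k => ∫ x in Ω, ((y k x) * φ x + ⟪gradient (y k) x, gradient φ x⟫)) atTop
      (𝓝 (∫ x in Ω, (ybar x * φ x + ⟪gradient ybar x, gradient φ x⟫)))

/-- H-convergence: for every right hand side in `H⁻¹(Ω)`, the weak solutions for the
coefficients `A k` converge weakly in `H¹₀(Ω)` to the weak solution for `Astar`. -/
def HConv {n : ℕ} (Ω : Set (Euc n)) (A : ℕ → Euc n → Mat n) (Astar : Euc n → Mat n) : Prop :=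
  ∀ (f₀ : Euc n → ℝ) (F : Euc n → Euc n),
    MemLp f₀ 2 (volume.restrict Ω) → MemLp F 2 (volume.restrict Ω) →
    ∀ (y : ℕ → Euc n → ℝ) (ybar : Euc n → ℝ),
      (∀ k, WeakSolH Ω (A k) f₀ F (y k)) → WeakSolH Ω Astar f₀ F ybar →
      WeakH10Conv Ω y ybar

/-- `Z`-periodicity: period 1 in each coordinate direction -/
def ZPeriodic {n : ℕ} {α : Type*} (g : Euc n → α) : Prop :=
  ∀ (x : Euc n) (j : Fin n), g (x + eb j) = g x

/-- membership in `H¹_#(Z)` -/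
def MemH1per {n : ℕ} (w : Euc n → ℝ) : Prop :=
  ZPeriodic w ∧ MemLp w 2 (volume.restrict (unitCube n)) ∧
    MemLp (fun z => gradient w z) 2 (volume.restrict (unitCube n))

/-- `w ∈ H¹_#(Z)` is a weak solution of the cell problem `∇·(B(z)(e_i + ∇w)) = 0` -/
def SolvesCell {n : ℕ} (B : Euc n → Mat n) (i : Fin n) (w : Euc n → ℝ) : Prop :=
  MemH1per w ∧ ∀ φ : Euc n → ℝ, ContDiff ℝ (⊤ : ℕ∞) φ → ZPeriodic φ →
    ∫ z in unitCube n, matDot (B z) (eb i + gradient w z) (gradient φ z) = 0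

/-- the local set `G_x(A)` of periodically homogenized matrices -/
def Gx {n : ℕ} {U : Type*} [MeasurableSpace U] (A : Euc n → U → Mat n) (x : Euc n) :
    Set (Mat n) :=
  {Q | ∃ u : Euc n → U, Measurable u ∧ ∃ w : Fin n → Euc n → ℝ,
    (∀ i, SolvesCell (fun z => A x (u z)) i (w i)) ∧
    ∀ i j, Q i j = ∫ z in unitCube n, matDot (A x (u z)) (eb i + gradient (w i) z) (eb j)}

/-- the set `𝓔(x,y)` -/
def CE {n : ℕ} {U : Type*} (A : Euc n → U → Mat n) (f f0 : Euc n → ℝ → U → ℝ)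
    (x : Euc n) (y : ℝ) : Set (Mat n × ℝ × ℝ) :=
  {p | ∃ u : U, p.1 = A x u ∧ p.2.1 = f x y u ∧ f0 x y u ≤ p.2.2}

/-- the set `G𝓔(x,y)` -/
def GE {n : ℕ} {U : Type*} [MeasurableSpace U] (A : Euc n → U → Mat n)
    (f f0 : Euc n → ℝ → U → ℝ) (x : Euc n) (y : ℝ) : Set (Mat n × ℝ × ℝ) :=
  {p | ∃ u : Euc n → U, Measurable u ∧
    (∃ w : Fin n → Euc n → ℝ, (∀ i, SolvesCell (fun z => A x (u z)) i (w i)) ∧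
      ∀ i j, p.1 i j = ∫ z in unitCube n, matDot (A x (u z)) (eb i + gradient (w i) z) (eb j)) ∧
    p.2.1 = ∫ z in unitCube n, f x y (u z) ∧ (∫ z in unitCube n, f0 x y (u z)) ≤ p.2.2}

/-- `y ∈ H¹₀(Ω) ∩ L^∞(Ω)` is a weak solution of the semilinear state equation
`-∇·(A(x,u(x))∇y) = f(x,y,u(x))` in `Ω`, `y = 0` on `∂Ω`. -/
def IsStateSolution {n : ℕ} {U : Type*} (Ω : Set (Euc n)) (A : Euc n → U → Mat n)
    (f : Euc n → ℝ → U → ℝ) (u : Euc n → U) (y : Euc n → ℝ) : Prop :=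
  MemH10 Ω y ∧ MemLp y ⊤ (volume.restrict Ω) ∧
  ∀ φ, IsTest Ω φ →
    ∫ x in Ω, matDot (A x (u x)) (gradient y x) (gradient φ x) =
      ∫ x in Ω, f x (y x) (u x) * φ x

set_option maxHeartbeats 2000000

/-- Lemma 2.8 (ii). -/
theorem averaged_modulus_partition_tendsto_zero
    {n m : ℕ} (Ω : Set (Euc n)) (hΩ : IsBoundedDomain Ω)
    (ω : ℝ → ℝ) (hωc : Continuous ω) (hω0 : ω 0 = 0) (hωnn : ∀ r, 0 ≤ r → 0 ≤ ω r)
    (F : Euc n → Euc m) (hF : MemLp F ⊤ (volume.restrict Ω))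
    (Op : ℕ → ℕ → Set (Euc n))
    (hOmeas : ∀ k j, j < k → MeasurableSet (Op k j))
    (hdisj : ∀ k, ∀ i < k, ∀ j < k, i ≠ j → Op k i ∩ Op k j = ∅)
    (hcover : ∀ k, 1 ≤ k → (⋃ j ∈ Finset.range k, Op k j) = Ω)
    (hdiam : ∀ ε > (0:ℝ), ∃ K, ∀ k ≥ K, ∀ j < k, Metric.diam (Op k j) < ε) :
    Tendsto (fun k => ∑ j ∈ Finset.range k,
        ((volume (Op k j)).toReal)⁻¹ *
          ∫ x in Op k j, ∫ s in Op k j, ω ‖F s - F x‖) atTop (𝓝 0) := by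
  classical
  obtain ⟨hΩopen, hΩconn, hΩbdd⟩ := hΩ
  have hΩmeas : MeasurableSet Ω := hΩopen.measurableSet
  have hΩfin : volume Ω < ⊤ := hΩbdd.measure_lt_top
  haveI hfinΩ : IsFiniteMeasure (volume.restrict Ω) :=
    ⟨by rwa [Measure.restrict_apply_univ]⟩
  -- replace `F` by an everywhere bounded strongly measurable representative `F'`
  have hFm : AEStronglyMeasurable F (volume.restrict Ω) := hF.1
  set F₀ : Euc n → Euc m := hFm.mk F with hF₀def
  have hF₀sm : StronglyMeasurable F₀ := hFm.stronglyMeasurable_mk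
  have hFF₀ : F =ᵐ[volume.restrict Ω] F₀ := hFm.ae_eq_mk
  set M : ℝ := (eLpNormEssSup F (volume.restrict Ω)).toReal with hMdef
  have hM0 : 0 ≤ M := ENNReal.toReal_nonneg
  have hMtop : eLpNormEssSup F (volume.restrict Ω) ≠ ⊤ := by
    have := hF.2
    rwa [eLpNorm_exponent_top, lt_top_iff_ne_top] at this
  have hFle : ∀ᵐ x ∂(volume.restrict Ω), ‖F x‖ ≤ M := by
    filter_upwards [ae_le_eLpNormEssSup (f := F) (μ := volume.restrict Ω)] with x hx
    have := ENNReal.toReal_mono hMtop hx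
    simpa using this
  set Sgood : Set (Euc n) := {x | ‖F₀ x‖ ≤ M} with hSgooddef
  have hSmeas : MeasurableSet Sgood :=
    measurableSet_le hF₀sm.measurable.norm measurable_const
  set F' : Euc n → Euc m := Sgood.piecewise F₀ (fun _ => 0) with hF'def
  have hF'sm : StronglyMeasurable F' :=
    hF₀sm.piecewise hSmeas stronglyMeasurable_const
  have hF'le : ∀ x, ‖F' x‖ ≤ M := by
    intro x
    by_cases hx : x ∈ Sgood
    · simp only [F', Set.piecewise_eq_of_mem _ _ _ hx]; exact hx
    · simp [F', Set.piecewise_eq_of_notMem _ _ _ hx, hM0]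
  have hFF' : F =ᵐ[volume.restrict Ω] F' := by
    filter_upwards [hFF₀, hFle] with x hx hxle
    have hmem : x ∈ Sgood := by simpa [Sgood, ← hx] using hxle
    simp [F', Set.piecewise_eq_of_mem _ _ _ hmem, hx]
  -- the sums for `F` and `F'` coincide
  have hsum_eq : ∀ k, (∑ j ∈ Finset.range k, ((volume (Op k j)).toReal)⁻¹ *
        ∫ x in Op k j, ∫ s in Op k j, ω ‖F s - F x‖)
      = ∑ j ∈ Finset.range k, ((volume (Op k j)).toReal)⁻¹ *
        ∫ x in Op k j, ∫ s in Op k j, ω ‖F' s - F' x‖ := by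
    intro k
    refine Finset.sum_congr rfl fun j hj => ?_
    have hjk : j < k := Finset.mem_range.1 hj
    have hk1 : 1 ≤ k := Nat.lt_of_le_of_lt (Nat.zero_le j) hjk
    have hsub : Op k j ⊆ Ω := by
      rw [← hcover k hk1]; exact Set.subset_biUnion_of_mem hj
    have hae : F =ᵐ[volume.restrict (Op k j)] F' :=
      ae_restrict_of_ae_restrict_of_subset hsub hFF'
    congr 1
    refine integral_congr_ae ?_
    filter_upwards [hae] with x hx
    refine integral_congr_ae ?_
    filter_upwards [hae] with s hs
    rw [hx, hs]
  have hfun : (fun k => ∑ j ∈ Finset.range k, ((volume (Op k j)).toReal)⁻¹ *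
        ∫ x in Op k j, ∫ s in Op k j, ω ‖F s - F x‖)
      = fun k => ∑ j ∈ Finset.range k, ((volume (Op k j)).toReal)⁻¹ *
        ∫ x in Op k j, ∫ s in Op k j, ω ‖F' s - F' x‖ := funext hsum_eq
  rw [hfun]
  -- main argument
  rw [Metric.tendsto_atTop]
  intro ε hε
  -- bound `C` for `ω` on `[0, 2M]`
  obtain ⟨r₀, hr₀mem, hr₀⟩ :=
    isCompact_Icc.exists_isMaxOn (Set.nonempty_Icc.2 (by positivity : (0:ℝ) ≤ 2 * M))
      hωc.continuousOn
  set C : ℝ := max (ω r₀) 0 with hCdef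
  have hC0 : 0 ≤ C := le_max_right _ _
  have hCb : ∀ r ∈ Set.Icc (0:ℝ) (2 * M), ω r ≤ C := fun r hr =>
    (hr₀ hr).trans (le_max_left _ _)
  set V : ℝ := (volume Ω).toReal with hVdef
  have hV0 : 0 ≤ V := ENNReal.toReal_nonneg
  set ε₁ : ℝ := ε / (2 * (V + 1)) with hε₁def
  have hε₁pos : 0 < ε₁ := by positivity
  -- `δ₁` from continuity of `ω` at `0`
  obtain ⟨δ₀, hδ₀pos, hδ₀⟩ := Metric.continuous_iff.1 hωc 0 ε₁ hε₁pos
  set δ₁ : ℝ := δ₀ / 2 with hδ₁def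
  have hδ₁pos : 0 < δ₁ := by positivity
  have hδ₁small : ∀ r : ℝ, |r| ≤ δ₁ → ω r < ε₁ := by
    intro r hr
    have : dist r 0 < δ₀ := by
      rw [Real.dist_eq, sub_zero]
      exact lt_of_le_of_lt hr (by linarith)
    have h2 := hδ₀ r this
    rw [hω0, Real.dist_eq, sub_zero] at h2
    exact lt_of_le_of_lt (le_abs_self _) h2
  -- approximation of `F'` by a continuous compactly supported `G`
  set θ : ℝ := ε * δ₁ / (12 * (C + 1)) with hθdef
  have hθpos : 0 < θ := by positivity
  have hF'int : Integrable (Ω.indicator F') volume := by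
    rw [integrable_indicator_iff hΩmeas]
    exact Integrable.mono' (integrable_const M) hF'sm.aestronglyMeasurable
      (Filter.Eventually.of_forall fun x => hF'le x)
  obtain ⟨G, hGsupp, hGθ, hGcont, hGint⟩ :=
    hF'int.exists_hasCompactSupport_integral_sub_le hθpos
  have hdiffint : Integrable (fun x => F' x - G x) (volume.restrict Ω) :=
    ((integrable_indicator_iff hΩmeas).1 hF'int).sub hGint.integrableOn
  have hdistθ : ∫ x in Ω, ‖F' x - G x‖ ≤ θ := by
    have h1 : ∫ x in Ω, ‖F' x - G x‖ = ∫ x in Ω, ‖Ω.indicator F' x - G x‖ := by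
      refine setIntegral_congr_fun hΩmeas fun x hx => ?_
      rw [Set.indicator_of_mem hx]
    have h2 : ∫ x in Ω, ‖Ω.indicator F' x - G x‖ ≤ ∫ x, ‖Ω.indicator F' x - G x‖ :=
      setIntegral_le_integral (hF'int.sub hGint).norm
        (Filter.Eventually.of_forall fun x => norm_nonneg _)
    rw [h1]; exact h2.trans hGθ
  -- the bad set `B`
  set B : Set (Euc n) := Ω ∩ {x | δ₁ / 3 < ‖F' x - G x‖} with hBdef
  have hBmeas : MeasurableSet B :=
    hΩmeas.inter (measurableSet_lt measurable_const
      (hF'sm.measurable.sub hGcont.measurable).norm)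
  have hBsubΩ : B ⊆ Ω := Set.inter_subset_left
  have hBfin : volume B ≠ ⊤ := ((measure_mono hBsubΩ).trans_lt hΩfin).ne
  have hBbound : (volume B).toReal ≤ 3 * θ / δ₁ := by
    have hmark := mul_meas_ge_le_integral_of_nonneg
      (μ := volume.restrict Ω) (f := fun x => ‖F' x - G x‖)
      (Filter.Eventually.of_forall fun x => norm_nonneg _) hdiffint.norm (δ₁ / 3)
    have hsubset : B ⊆ {x | δ₁ / 3 ≤ ‖F' x - G x‖} ∩ Ω := by
      intro x hx
      exact ⟨show δ₁ / 3 ≤ ‖F' x - G x‖ from le_of_lt hx.2, hx.1⟩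
    have h1 : volume B ≤ (volume.restrict Ω) {x | δ₁ / 3 ≤ ‖F' x - G x‖} := by
      rw [Measure.restrict_apply' hΩmeas]
      exact measure_mono hsubset
    have h2 : (volume B).toReal ≤
        ((volume.restrict Ω) {x | δ₁ / 3 ≤ ‖F' x - G x‖}).toReal :=
      ENNReal.toReal_mono (measure_ne_top _ _) h1
    have h3 : δ₁ / 3 * (volume B).toReal ≤ θ := by
      calc δ₁ / 3 * (volume B).toReal
          ≤ δ₁ / 3 * ((volume.restrict Ω) {x | δ₁ / 3 ≤ ‖F' x - G x‖}).toReal := by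
            exact mul_le_mul_of_nonneg_left h2 (by positivity)
        _ ≤ ∫ x in Ω, ‖F' x - G x‖ := hmark
        _ ≤ θ := hdistθ
    rw [le_div_iff₀ hδ₁pos]
    linarith
  -- uniform continuity of `G` on the closure of `Ω`
  have hcomp : IsCompact (closure Ω) := hΩbdd.isCompact_closure
  have hGuc := hcomp.uniformContinuousOn_of_continuous hGcont.continuousOn
  obtain ⟨δ₂, hδ₂pos, hδ₂⟩ := Metric.uniformContinuousOn_iff.1 hGuc (δ₁ / 3) (by positivity)
  -- choose `K`
  obtain ⟨K, hK⟩ := hdiam δ₂ hδ₂pos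
  refine ⟨max K 1, fun k hk => ?_⟩
  have hkK : K ≤ k := le_trans (le_max_left _ _) hk
  have hk1 : 1 ≤ k := le_trans (le_max_right _ _) hk
  -- per-piece estimate
  have hterm : ∀ j ∈ Finset.range k,
      ((volume (Op k j)).toReal)⁻¹ * (∫ x in Op k j, ∫ s in Op k j, ω ‖F' s - F' x‖)
        ≤ ε₁ * (volume (Op k j)).toReal + 2 * C * (volume (B ∩ Op k j)).toReal := by
    intro j hj
    have hjk : j < k := Finset.mem_range.1 hj
    set O : Set (Euc n) := Op k j with hOdef
    have hOm : MeasurableSet O := hOmeas k j hjk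
    have hOsub : O ⊆ Ω := by
      rw [← hcover k hk1]; exact Set.subset_biUnion_of_mem hj
    have hOfin : volume O ≠ ⊤ := ((measure_mono hOsub).trans_lt hΩfin).ne
    haveI : IsFiniteMeasure (volume.restrict O) :=
      ⟨by rw [Measure.restrict_apply_univ]; exact lt_top_iff_ne_top.2 hOfin⟩
    set v : ℝ := (volume O).toReal with hvdef
    set b : ℝ := (volume (B ∩ O)).toReal with hbdef
    have hv0 : 0 ≤ v := ENNReal.toReal_nonneg
    have hb0 : 0 ≤ b := ENNReal.toReal_nonneg
    have hObdd : Bornology.IsBounded O := hΩbdd.subset hOsub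
    -- pointwise estimate on `O × O`
    have hpt : ∀ x ∈ O, ∀ s ∈ O, ω ‖F' s - F' x‖ ≤
        ε₁ + C * B.indicator (fun _ => (1:ℝ)) x + C * B.indicator (fun _ => (1:ℝ)) s := by
      intro x hx s hs
      have hind : ∀ y, (0:ℝ) ≤ B.indicator (fun _ => (1:ℝ)) y := fun y =>
        Set.indicator_nonneg (fun _ _ => zero_le_one) y
      have hbig : ω ‖F' s - F' x‖ ≤ C := by
        refine hCb _ ⟨norm_nonneg _, ?_⟩
        calc ‖F' s - F' x‖ ≤ ‖F' s‖ + ‖F' x‖ := norm_sub_le _ _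
          _ ≤ 2 * M := by linarith [hF'le s, hF'le x]
      by_cases hxB : x ∈ B
      · rw [Set.indicator_of_mem hxB]
        have h1 : 0 ≤ C * B.indicator (fun _ => (1:ℝ)) s := mul_nonneg hC0 (hind s)
        linarith [hε₁pos.le]
      · by_cases hsB : s ∈ B
        · rw [Set.indicator_of_mem hsB]
          have h1 : 0 ≤ C * B.indicator (fun _ => (1:ℝ)) x := mul_nonneg hC0 (hind x)
          linarith [hε₁pos.le]
        · rw [Set.indicator_of_notMem hxB, Set.indicator_of_notMem hsB]
          have hx' : ‖F' x - G x‖ ≤ δ₁ / 3 := by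
            by_contra h
            exact hxB ⟨hOsub hx, lt_of_not_ge h⟩
          have hs' : ‖F' s - G s‖ ≤ δ₁ / 3 := by
            by_contra h
            exact hsB ⟨hOsub hs, lt_of_not_ge h⟩
          have hdistxs : dist s x < δ₂ :=
            lt_of_le_of_lt (Metric.dist_le_diam_of_mem hObdd hs hx) (hK k hkK j hjk)
          have hG : dist (G s) (G x) < δ₁ / 3 :=
            hδ₂ s (subset_closure (hOsub hs)) x (subset_closure (hOsub hx)) hdistxs
          have hGnorm : ‖G s - G x‖ < δ₁ / 3 := by rwa [← dist_eq_norm]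
          have htotal : ‖F' s - F' x‖ ≤ δ₁ := by
            calc ‖F' s - F' x‖ = ‖(F' s - G s) + (G s - G x) + (G x - F' x)‖ := by
                  congr 1; abel
              _ ≤ ‖F' s - G s‖ + ‖G s - G x‖ + ‖G x - F' x‖ := by
                  exact (norm_add_le _ _).trans (by gcongr; exact norm_add_le _ _)
              _ ≤ δ₁ / 3 + δ₁ / 3 + δ₁ / 3 := by
                  have : ‖G x - F' x‖ = ‖F' x - G x‖ := norm_sub_rev _ _
                  rw [this]; gcongr <;> linarith
              _ = δ₁ := by ring
          have := hδ₁small ‖F' s - F' x‖ (by rwa [abs_of_nonneg (norm_nonneg _)])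
          linarith
    -- integrability of the bound
    have hindint : Integrable (fun s : Euc n => C * B.indicator (fun _ => (1:ℝ)) s)
        (volume.restrict O) :=
      (((integrable_const (1:ℝ)).indicator hBmeas).const_mul C)
    have hindval : ∫ s in O, B.indicator (fun _ => (1:ℝ)) s = b := by
      rw [integral_indicator hBmeas]
      simp only [integral_const, Measure.restrict_restrict hBmeas, smul_eq_mul, mul_one]
      rw [Measure.real, Measure.restrict_apply_univ]
    -- inner estimate
    have hinner : ∀ x ∈ O, (∫ s in O, ω ‖F' s - F' x‖) ≤
        (ε₁ + C * B.indicator (fun _ => (1:ℝ)) x) * v + C * b := by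
      intro x hx
      have hle := integral_mono_of_nonneg
        (Filter.Eventually.of_forall fun s => hωnn _ (norm_nonneg _))
        ((integrable_const (ε₁ + C * B.indicator (fun _ => (1:ℝ)) x)).add hindint)
        (by filter_upwards [ae_restrict_mem hOm] with s hs using hpt x hx s hs)
      refine hle.trans_eq ?_
      simp only [Pi.add_apply]
      rw [integral_add (integrable_const _) hindint, integral_const,
        integral_const_mul, hindval]
      simp [Measure.real, Measure.restrict_apply_univ, smul_eq_mul, mul_comm]
      exact Or.inl rfl
    -- outer estimate
    have houter : (∫ x in O, ∫ s in O, ω ‖F' s - F' x‖) ≤ ε₁ * v * v + 2 * (C * b * v) := by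
      have h1 : Integrable (fun x : Euc n => (ε₁ + C * B.indicator (fun _ => (1:ℝ)) x) * v)
          (volume.restrict O) := by
        exact ((integrable_const ε₁).add hindint).mul_const v
      have h2 : Integrable (fun x : Euc n => ε₁ + C * B.indicator (fun _ => (1:ℝ)) x)
          (volume.restrict O) := by
        exact (integrable_const ε₁).add hindint
      have hrhsint : Integrable
          (fun x : Euc n => (ε₁ + C * B.indicator (fun _ => (1:ℝ)) x) * v + C * b)
          (volume.restrict O) := h1.add (integrable_const _)
      have hle := integral_mono_of_nonneg
        (Filter.Eventually.of_forall fun x =>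
          integral_nonneg fun s => hωnn _ (norm_nonneg _))
        hrhsint
        (by filter_upwards [ae_restrict_mem hOm] with x hx using hinner x hx)
      refine hle.trans_eq ?_
      rw [integral_add h1 (integrable_const _), integral_mul_const,
        integral_add (integrable_const ε₁) hindint, integral_const,
        integral_const_mul, hindval, integral_const]
      simp only [Measure.real, Measure.restrict_apply_univ, smul_eq_mul]
      ring
    -- combine
    by_cases hv : v = 0
    · have hO0 : volume O = 0 := by
        rcases (ENNReal.toReal_eq_zero_iff _).1 hv with h | h
        · exact h
        · exact absurd h hOfin
      have hres : volume.restrict O = 0 := Measure.restrict_eq_zero.2 hO0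
      rw [hres]
      simp only [integral_zero_measure, mul_zero]
      have h1 : 0 ≤ ε₁ * v := mul_nonneg hε₁pos.le hv0
      have h2 : 0 ≤ 2 * C * b := mul_nonneg (by linarith) hb0
      linarith
    · have hvpos : 0 < v := lt_of_le_of_ne hv0 (Ne.symm hv)
      calc ((volume O).toReal)⁻¹ * (∫ x in O, ∫ s in O, ω ‖F' s - F' x‖)
          ≤ v⁻¹ * (ε₁ * v * v + 2 * (C * b * v)) := by
            exact mul_le_mul_of_nonneg_left houter (inv_nonneg.2 hv0)
        _ = ε₁ * v + 2 * C * b := by field_simp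
  -- sum of the measures
  have hdisjO : Set.PairwiseDisjoint (↑(Finset.range k)) (Op k) := by
    intro i hi j hj hne
    exact Set.disjoint_iff_inter_eq_empty.2
      (hdisj k i (Finset.mem_range.1 (Finset.mem_coe.1 hi)) j
        (Finset.mem_range.1 (Finset.mem_coe.1 hj)) hne)
  have hOmeas' : ∀ j ∈ Finset.range k, MeasurableSet (Op k j) := fun j hj =>
    hOmeas k j (Finset.mem_range.1 hj)
  have hsumv : ∑ j ∈ Finset.range k, (volume (Op k j)).toReal ≤ V := by
    have h1 : ∑ j ∈ Finset.range k, volume (Op k j) =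
        volume (⋃ j ∈ Finset.range k, Op k j) :=
      (measure_biUnion_finset hdisjO hOmeas').symm
    have h2 : volume (⋃ j ∈ Finset.range k, Op k j) ≤ volume Ω := by
      rw [hcover k hk1]
    have h3 : ∀ j ∈ Finset.range k, volume (Op k j) ≠ ⊤ := by
      intro j hj
      have hsub : Op k j ⊆ Ω := by
        rw [← hcover k hk1]; exact Set.subset_biUnion_of_mem hj
      exact ((measure_mono hsub).trans_lt hΩfin).ne
    rw [← ENNReal.toReal_sum h3]
    exact ENNReal.toReal_mono hΩfin.ne (h1 ▸ h2)
  have hsumb : ∑ j ∈ Finset.range k, (volume (B ∩ Op k j)).toReal ≤ (volume B).toReal := by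
    have hd : Set.PairwiseDisjoint (↑(Finset.range k)) (fun j => B ∩ Op k j) := by
      intro i hi j hj hne
      exact ((hdisjO hi hj hne).inter_left' B).inter_right' B
    have h1 : ∑ j ∈ Finset.range k, volume (B ∩ Op k j) =
        volume (⋃ j ∈ Finset.range k, B ∩ Op k j) :=
      (measure_biUnion_finset hd fun j hj => hBmeas.inter (hOmeas' j hj)).symm
    have h2 : volume (⋃ j ∈ Finset.range k, B ∩ Op k j) ≤ volume B :=
      measure_mono (Set.iUnion₂_subset fun j hj => Set.inter_subset_left)
    have h3 : ∀ j ∈ Finset.range k, volume (B ∩ Op k j) ≠ ⊤ := fun j hj =>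
      ((measure_mono Set.inter_subset_left).trans_lt (lt_top_iff_ne_top.2 hBfin)).ne
    rw [← ENNReal.toReal_sum h3]
    exact ENNReal.toReal_mono hBfin (h1 ▸ h2)
  -- final estimate
  have hS_nonneg : 0 ≤ ∑ j ∈ Finset.range k, ((volume (Op k j)).toReal)⁻¹ *
      ∫ x in Op k j, ∫ s in Op k j, ω ‖F' s - F' x‖ := by
    refine Finset.sum_nonneg fun j hj => ?_
    refine mul_nonneg (inv_nonneg.2 ENNReal.toReal_nonneg) ?_
    exact integral_nonneg fun x => integral_nonneg fun s => hωnn _ (norm_nonneg _)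
  have hSle : (∑ j ∈ Finset.range k, ((volume (Op k j)).toReal)⁻¹ *
        ∫ x in Op k j, ∫ s in Op k j, ω ‖F' s - F' x‖)
      ≤ ε₁ * V + 2 * C * (3 * θ / δ₁) := by
    calc (∑ j ∈ Finset.range k, ((volume (Op k j)).toReal)⁻¹ *
          ∫ x in Op k j, ∫ s in Op k j, ω ‖F' s - F' x‖)
        ≤ ∑ j ∈ Finset.range k,
            (ε₁ * (volume (Op k j)).toReal + 2 * C * (volume (B ∩ Op k j)).toReal) :=
          Finset.sum_le_sum hterm
      _ = ε₁ * (∑ j ∈ Finset.range k, (volume (Op k j)).toReal)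
          + 2 * C * (∑ j ∈ Finset.range k, (volume (B ∩ Op k j)).toReal) := by
          rw [Finset.sum_add_distrib, Finset.mul_sum, Finset.mul_sum]
      _ ≤ ε₁ * V + 2 * C * (volume B).toReal := by
          gcongr
      _ ≤ ε₁ * V + 2 * C * (3 * θ / δ₁) := by
          gcongr
  have hfinal : ε₁ * V + 2 * C * (3 * θ / δ₁) < ε := by
    have h1 : ε₁ * V < ε / 2 := by
      have heq : ε₁ * (V + 1) = ε / 2 := by
        rw [hε₁def]; field_simp
      nlinarith
    have h2 : 2 * C * (3 * θ / δ₁) < ε / 2 := by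
      have heq : 2 * (C + 1) * (3 * θ / δ₁) = ε / 2 := by
        rw [hθdef]; field_simp; ring
      nlinarith [hθpos, hδ₁pos, div_pos (by positivity : (0:ℝ) < 3 * θ) hδ₁pos]
    linarith
  rw [Real.dist_eq, sub_zero, abs_of_nonneg hS_nonneg]
  exact lt_of_le_of_lt hSle hfinal

end
end

section
/- Assume (S1)–(S5) and additionally (S6): for almost all x ∈ Ω, f(x,·,v) is continuous uniformly in v ∈ U and f⁰(x,·,v) is lower semicontinuous uniformly in v ∈ U, i.e. for any y ∈ ℝ and ε > 0 there exists τ = τ(x,y) > 0 such that for all ỹ ∈ B_τ(y) and all v ∈ U, |f(x,ỹ,v) − f(x,y,v)| < ε and f⁰(x,ỹ,v) > f⁰(x,y,v) − ε. Then the Cesari-type condition 𝓔(x,y) = ⋂_{δ>0} cl(G𝓔(x, B_δ(y))) a.e. is equivalent to 𝓔(x,y) = cl(G𝓔(x,y)) for a.e. (x,y) ∈ Ω×ℝ. -/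
open MeasureTheory Filter Topology Metric Set
open scoped BoundedContinuousFunction RealInnerProductSpace

noncomputable section

namespace Aux

variable {n : ℕ}

lemma unitCube_eq_preimage :
    unitCube n = (EuclideanSpace.equiv (Fin n) ℝ) ⁻¹' (Set.Icc 0 1) := by
  ext z
  simp [unitCube, Set.mem_Icc, Pi.le_def, forall_and]

lemma measurableSet_unitCube : MeasurableSet (unitCube n) := by
  rw [unitCube_eq_preimage]
  exact measurableSet_Icc.preimage (EuclideanSpace.equiv (Fin n) ℝ).continuous.measurable

lemma isCompact_unitCube : IsCompact (unitCube n) := by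
  rw [unitCube_eq_preimage]
  rw [← (EuclideanSpace.equiv (Fin n) ℝ).image_symm_eq_preimage]
  exact isCompact_Icc.image (EuclideanSpace.equiv (Fin n) ℝ).symm.continuous

lemma volume_unitCube : volume (unitCube n) = 1 := by
  have h := (EuclideanSpace.volume_preserving_symm_measurableEquiv_toLp (Fin n)).measure_preimage
    (s := Set.Icc (0 : Fin n → ℝ) 1) measurableSet_Icc.nullMeasurableSet
  have he : unitCube n = ((MeasurableEquiv.toLp 2 (Fin n → ℝ)).symm) ⁻¹' (Set.Icc 0 1) := by
    ext z
    simp only [unitCube, Set.mem_Icc, Pi.le_def, Set.mem_setOf_eq, Set.mem_preimage, forall_and]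
    exact Iff.rfl
  rw [he, h, Real.volume_Icc_pi]
  simp

instance : IsFiniteMeasure (volume.restrict (unitCube n)) :=
  ⟨by rw [Measure.restrict_apply_univ, volume_unitCube]; exact ENNReal.one_lt_top⟩

lemma measure_restrict_cube_univ :
    ((volume.restrict (unitCube n)) Set.univ).toReal = 1 := by
  rw [Measure.restrict_apply_univ, volume_unitCube]; rfl

lemma setIntegral_cube_const (c : ℝ) : ∫ _ in unitCube n, c = c := by
  rw [setIntegral_const, measureReal_def, volume_unitCube]; simp

lemma matDot_eb_left (Q : Mat n) (η : Euc n) (i : Fin n) :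
    matDot Q (eb i) η = ∑ a, Q a i * η a := by
  unfold matDot eb
  refine Finset.sum_congr rfl fun a _ => ?_
  rw [Finset.sum_eq_single i]
  · simp [EuclideanSpace.single_apply]
  · intro b _ hb
    simp [EuclideanSpace.single_apply, hb]
  · simp

lemma matDot_eb_eb (Q : Mat n) (i j : Fin n) : matDot Q (eb i) (eb j) = Q j i := by
  rw [matDot_eb_left]
  rw [Finset.sum_eq_single j]
  · simp [eb, EuclideanSpace.single_apply]
  · intro b _ hb
    simp [eb, EuclideanSpace.single_apply, hb]
  · simp

lemma mem_closure_prod_iff {s : Set (Mat n × ℝ × ℝ)} {p : Mat n × ℝ × ℝ} :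
    p ∈ closure s ↔ ∀ V : Set (Mat n), IsOpen V → p.1 ∈ V → ∀ ε > 0,
      ∃ q ∈ s, q.1 ∈ V ∧ |q.2.1 - p.2.1| < ε ∧ |q.2.2 - p.2.2| < ε := by
  constructor
  · intro h V hV hpV ε hε
    have hO : IsOpen (V ×ˢ (ball p.2.1 ε ×ˢ ball p.2.2 ε)) :=
      hV.prod (isOpen_ball.prod isOpen_ball)
    have hpO : p ∈ V ×ˢ (ball p.2.1 ε ×ˢ ball p.2.2 ε) :=
      ⟨hpV, mem_ball_self hε, mem_ball_self hε⟩
    rcases _root_.mem_closure_iff.1 h _ hO hpO with ⟨q, ⟨hq1, hq2, hq3⟩, hqs⟩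
    refine ⟨q, hqs, hq1, ?_, ?_⟩
    · have := mem_ball.1 hq2; rwa [Real.dist_eq] at this
    · have := mem_ball.1 hq3; rwa [Real.dist_eq] at this
  · intro h
    rw [_root_.mem_closure_iff]
    intro o ho hpo
    rcases isOpen_prod_iff.1 ho p.1 p.2 hpo with ⟨u, v, hu, hv, hpu, hpv, huv⟩
    rcases Metric.isOpen_iff.1 hv p.2 hpv with ⟨ε, hε, hball⟩
    rcases h u hu hpu ε hε with ⟨q, hqs, hq1, hq2, hq3⟩
    refine ⟨q, huv ⟨hq1, hball ?_⟩, hqs⟩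
    rw [mem_ball, Prod.dist_eq]
    exact max_lt (by rwa [Real.dist_eq]) (by rwa [Real.dist_eq])



/-- Core 1-D step in Pi space. -/
lemma pi_core {m : ℕ} (ψ : (Fin (m+1) → ℝ) → ℝ) (hψ : ContDiff ℝ (⊤ : ℕ∞) ψ) (a : Fin (m+1))
    (hper : ∀ x, ψ (x + Pi.single a 1) = ψ x) :
    ∫ x in Set.Icc (0 : Fin (m+1) → ℝ) 1, fderiv ℝ ψ x (Pi.single a 1) = 0 := by
  set G : (Fin (m+1) → ℝ) → ℝ := fun x => fderiv ℝ ψ x (Pi.single a 1) with hG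
  have hGcont : Continuous G := (hψ.continuous_fderiv (by simp)).clm_apply continuous_const
  have hGint : IntegrableOn G (Set.Icc 0 1) volume :=
    hGcont.continuousOn.integrableOn_compact isCompact_Icc
  set e := MeasurableEquiv.piFinSuccAbove (fun _ : Fin (m+1) => ℝ) a with he_def
  have he : MeasurePreserving e volume ((volume : Measure ℝ).prod volume) :=
    measurePreserving_piFinSuccAbove (fun _ => (volume : Measure ℝ)) a
  have hIccpre : e ⁻¹' ((Set.Icc (0:ℝ) 1) ×ˢ (Set.Icc (0 : Fin m → ℝ) 1)) = Set.Icc 0 1 := by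
    ext x
    simp only [Set.mem_preimage, Set.mem_prod, Set.mem_Icc, Pi.le_def]
    constructor
    · rintro ⟨⟨h1, h2⟩, h3, h4⟩
      constructor
      · intro j
        rcases eq_or_ne j a with rfl | hj
        · exact h1
        · obtain ⟨z, hz⟩ := Fin.exists_succAbove_eq hj
          rw [← hz]; exact h3 z
      · intro j
        rcases eq_or_ne j a with rfl | hj
        · exact h2
        · obtain ⟨z, hz⟩ := Fin.exists_succAbove_eq hj
          rw [← hz]; exact h4 z
    · rintro ⟨h1, h2⟩
      exact ⟨⟨h1 a, h2 a⟩, fun z => h1 _, fun z => h2 _⟩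
  have h2' : MeasurePreserving e (volume.restrict (Set.Icc 0 1))
      (((volume : Measure ℝ).prod volume).restrict
        ((Set.Icc (0:ℝ) 1) ×ˢ (Set.Icc (0 : Fin m → ℝ) 1))) := by
    have := he.restrict_preimage
      (s := (Set.Icc (0:ℝ) 1) ×ˢ (Set.Icc (0 : Fin m → ℝ) 1))
      (measurableSet_Icc.prod measurableSet_Icc)
    rwa [hIccpre] at this
  have hprodr : ((volume : Measure ℝ).restrict (Set.Icc 0 1)).prod
      ((volume : Measure (Fin m → ℝ)).restrict (Set.Icc 0 1)) =
      ((volume : Measure ℝ).prod volume).restrict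
        ((Set.Icc (0:ℝ) 1) ×ˢ (Set.Icc (0 : Fin m → ℝ) 1)) := Measure.prod_restrict _ _
  set μ1 := (volume : Measure ℝ).restrict (Set.Icc 0 1) with hμ1
  set μ2 := (volume : Measure (Fin m → ℝ)).restrict (Set.Icc 0 1) with hμ2
  have hIntGs : Integrable (fun p : ℝ × (Fin m → ℝ) => G (e.symm p)) (μ1.prod μ2) := by
    rw [hprodr]
    have hsymm := (h2'.symm e).integrable_comp_emb e.symm.measurableEmbedding
      (g := G)
    exact hsymm.2 hGint
  have step1 : ∫ x in Set.Icc (0 : Fin (m+1) → ℝ) 1, G x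
      = ∫ p, G (e.symm p) ∂(μ1.prod μ2) := by
    rw [hprodr]
    have := h2'.integral_comp e.measurableEmbedding (fun p => G (e.symm p))
    simp only [e.symm_apply_apply] at this
    exact this
  have inner0 : ∀ y : Fin m → ℝ, (∫ t, G (e.symm (t, y)) ∂μ1) = 0 := by
    intro y
    have hsymm_eq : ∀ t : ℝ, (e.symm (t, y) : Fin (m+1) → ℝ) = a.insertNth t y := fun t => rfl
    set c : Fin (m+1) → ℝ := a.insertNth 0 y with hc
    set d : Fin (m+1) → ℝ := Pi.single a 1 with hd
    have haff : ∀ t : ℝ, a.insertNth t y = c + t • d := by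
      intro t
      funext j
      refine Fin.succAboveCases a ?_ ?_ j
      · simp [hc, hd, Fin.insertNth_apply_same]
      · intro i
        simp [hc, hd, Fin.insertNth_apply_succAbove,
          Pi.single_eq_of_ne (Fin.succAbove_ne a i)]
    have hF : ∀ t : ℝ, HasDerivAt (fun s : ℝ => ψ (c + s • d)) (G (c + t • d)) t := by
      intro t
      have h1 : HasDerivAt (fun s : ℝ => c + s • d) d t := by
        simpa using ((hasDerivAt_id t).smul_const d).const_add c
      exact (hψ.differentiable (by simp) (c + t • d)).hasFDerivAt.comp_hasDerivAt t h1
    have hcont2 : Continuous fun t : ℝ => G (c + t • d) :=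
      hGcont.comp (continuous_const.add (continuous_id.smul continuous_const))
    calc (∫ t, G (e.symm (t, y)) ∂μ1)
        = ∫ t in Set.Icc (0:ℝ) 1, G (c + t • d) := by
          rw [hμ1]
          refine integral_congr_ae (Filter.Eventually.of_forall fun t => ?_)
          show G (e.symm (t, y)) = G (c + t • d)
          rw [← haff t]
          exact congrArg G (hsymm_eq t)
      _ = ∫ t in Set.Ioc (0:ℝ) 1, G (c + t • d) := integral_Icc_eq_integral_Ioc
      _ = ∫ t in (0:ℝ)..1, G (c + t • d) :=
          (intervalIntegral.integral_of_le zero_le_one).symm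
      _ = ψ (c + (1:ℝ) • d) - ψ (c + (0:ℝ) • d) :=
          intervalIntegral.integral_eq_sub_of_hasDerivAt (fun t _ => hF t)
            (hcont2.intervalIntegrable 0 1)
      _ = 0 := by
          rw [one_smul, zero_smul, add_zero, hd, hper c, sub_self]
  have step2 : (∫ p, G (e.symm p) ∂(μ1.prod μ2)) = 0 := by
    rw [integral_prod _ hIntGs]
    have swap := integral_integral_swap (f := fun (t : ℝ) (y : Fin m → ℝ) => G (e.symm (t, y)))
      hIntGs
    rw [swap]
    simp [inner0]
  rw [step1, step2]

/-- integral of a partial derivative of a periodic smooth function over the unit cube is 0 -/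
lemma integral_fderiv_periodic {n : ℕ} (φ : Euc n → ℝ) (hφ : ContDiff ℝ (⊤ : ℕ∞) φ)
    (hper : ∀ (x : Euc n) (j : Fin n), φ (x + eb j) = φ x) (a : Fin n) :
    (∫ z in unitCube n, fderiv ℝ φ z (eb a)) = 0 := by
  cases n with
  | zero => exact a.elim0
  | succ m =>
    set L := EuclideanSpace.equiv (Fin (m+1)) ℝ with hL
    set ψ : (Fin (m+1) → ℝ) → ℝ := fun x => φ (L.symm x) with hψdef
    have hψ : ContDiff ℝ (⊤ : ℕ∞) ψ := hφ.comp L.symm.contDiff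
    have hsingle : (L.symm (Pi.single a 1) : Euc (m+1)) = eb a := rfl
    have hψper : ∀ x, ψ (x + Pi.single a 1) = ψ x := by
      intro x
      show φ (L.symm (x + Pi.single a 1)) = φ (L.symm x)
      rw [map_add, hsingle, hper]
    have key : ∀ z : Euc (m+1), fderiv ℝ φ z (eb a) = fderiv ℝ ψ (L z) (Pi.single a 1) := by
      intro z
      have hdf : HasFDerivAt ψ
          ((fderiv ℝ φ (L.symm (L z))).comp
            (L.symm : (Fin (m+1) → ℝ) →L[ℝ] Euc (m+1))) (L z) :=
        (hφ.differentiable (by simp) _).hasFDerivAt.comp _ L.symm.hasFDerivAt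
      rw [hdf.fderiv]
      simp only [ContinuousLinearMap.coe_comp', Function.comp_apply,
        ContinuousLinearEquiv.coe_coe, hsingle, L.symm_apply_apply]
    have hpre : ((MeasurableEquiv.toLp 2 (Fin (m+1) → ℝ)).symm) ⁻¹'
        (Set.Icc (0 : Fin (m+1) → ℝ) 1) = unitCube (m+1) := by
      ext z
      simp only [unitCube, Set.mem_Icc, Pi.le_def, Set.mem_setOf_eq, Set.mem_preimage,
        forall_and]
      exact Iff.rfl
    have hmp : MeasurePreserving ((MeasurableEquiv.toLp 2 (Fin (m+1) → ℝ)).symm)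
        (volume.restrict (unitCube (m+1))) (volume.restrict (Set.Icc 0 1)) := by
      have := (EuclideanSpace.volume_preserving_symm_measurableEquiv_toLp (Fin (m+1))).restrict_preimage
        (s := Set.Icc (0 : Fin (m+1) → ℝ) 1) measurableSet_Icc
      rwa [hpre] at this
    calc (∫ z in unitCube (m+1), fderiv ℝ φ z (eb a))
        = ∫ z in unitCube (m+1),
            (fun x => fderiv ℝ ψ x (Pi.single a 1)) ((MeasurableEquiv.toLp 2 (Fin (m+1) → ℝ)).symm z) := by
          refine integral_congr_ae (Filter.Eventually.of_forall fun z => ?_)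
          exact key z
      _ = ∫ x in Set.Icc (0 : Fin (m+1) → ℝ) 1, fderiv ℝ ψ x (Pi.single a 1) :=
          hmp.integral_comp ((MeasurableEquiv.toLp 2 (Fin (m+1) → ℝ)).symm).measurableEmbedding
            (fun x => fderiv ℝ ψ x (Pi.single a 1))
      _ = 0 := pi_core ψ hψ a hψper


section MainAux
variable {n : ℕ} {U : Type*} [TopologicalSpace U] [MeasurableSpace U] [BorelSpace U]

lemma gradient_apply_eb {φ : Euc n → ℝ} {z : Euc n} (a : Fin n) :
    gradient φ z a = fderiv ℝ φ z (eb a) := by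
  have h2 : ⟪gradient φ z, EuclideanSpace.single a (1:ℝ)⟫
      = fderiv ℝ φ z (EuclideanSpace.single a 1) := by
    simp [gradient, InnerProductSpace.toDual_symm_apply]
  have h3 := EuclideanSpace.inner_single_right (𝕜 := ℝ) a (1:ℝ) (gradient φ z)
  rw [h2] at h3
  simpa [eb] using h3.symm

lemma CE_subset_GE (A : Euc n → U → Mat n) (f f0 : Euc n → ℝ → U → ℝ)
    (x : Euc n) (y : ℝ) (hsymm : ∀ v, (A x v).IsSymm) :
    CE A f f0 x y ⊆ GE A f f0 x y := by
  rintro p ⟨v, hP, hζ, hζ0⟩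
  have hgrad0 : ∀ z : Euc n, gradient (fun _ : Euc n => (0:ℝ)) z = 0 :=
    fun z => gradient_const z (0:ℝ)
  have hconst : ∀ (i j : Fin n) (z : Euc n),
      matDot (A x v) (eb i + gradient (fun _ : Euc n => (0:ℝ)) z) (eb j)
        = A x v i j := by
    intro i j z
    rw [hgrad0, add_zero, matDot_eb_eb]
    exact (hsymm v).apply i j
  refine ⟨fun _ => v, measurable_const, ⟨fun _ => (fun _ => 0), fun i => ?_, fun i j => ?_⟩,
      ?_, ?_⟩
  · constructor
    · refine ⟨fun _ _ => rfl, memLp_const 0, ?_⟩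
      have h0 : (fun z : Euc n => gradient (fun _ : Euc n => (0:ℝ)) z)
          = fun _ : Euc n => (0 : Euc n) := funext hgrad0
      rw [h0]
      exact memLp_const 0
    · intro φ hφ hper
      have hrw : ∀ z : Euc n,
          matDot (A x v) (eb i + gradient (fun _ : Euc n => (0:ℝ)) z) (gradient φ z)
            = ∑ a, A x v a i * fderiv ℝ φ z (eb a) := by
        intro z
        rw [hgrad0, add_zero, matDot_eb_left]
        exact Finset.sum_congr rfl fun a _ => by rw [gradient_apply_eb]
      calc (∫ z in unitCube n,
              matDot (A x v) (eb i + gradient (fun _ : Euc n => (0:ℝ)) z) (gradient φ z))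
          = ∫ z in unitCube n, ∑ a, A x v a i * fderiv ℝ φ z (eb a) :=
            integral_congr_ae (Filter.Eventually.of_forall hrw)
        _ = ∑ a, ∫ z in unitCube n, A x v a i * fderiv ℝ φ z (eb a) := by
            refine integral_finset_sum _ fun a _ => ?_
            exact ContinuousOn.integrableOn_compact isCompact_unitCube
              (continuous_const.mul
                ((hφ.continuous_fderiv (by simp)).clm_apply continuous_const)).continuousOn
        _ = ∑ a, A x v a i * ∫ z in unitCube n, fderiv ℝ φ z (eb a) :=
            Finset.sum_congr rfl fun a _ => integral_const_mul _ _
        _ = 0 := Finset.sum_eq_zero fun a _ => by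
            rw [integral_fderiv_periodic φ hφ hper a, mul_zero]
  · rw [hP, integral_congr_ae (Filter.Eventually.of_forall fun z => hconst i j z),
      setIntegral_cube_const]
  · rw [hζ]
    exact (setIntegral_cube_const _).symm
  · rw [setIntegral_cube_const]
    exact hζ0

lemma closure_GE_subset_iInter (A : Euc n → U → Mat n) (f f0 : Euc n → ℝ → U → ℝ)
    (x : Euc n) (y : ℝ) :
    closure (GE A f f0 x y) ⊆
      ⋂ δ > (0:ℝ), closure (⋃ yt ∈ Metric.ball y δ, GE A f f0 x yt) := by
  intro p hp
  refine Set.mem_iInter₂.2 fun δ hδ => ?_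
  exact closure_mono (Set.subset_biUnion_of_mem (Metric.mem_ball_self hδ)) hp

lemma ae_prod_fst {α β : Type*} [MeasurableSpace α] [MeasurableSpace β]
    {μ : Measure α} {ν : Measure β} [SFinite ν] {P : α → Prop}
    (h : ∀ᵐ x ∂μ, P x) : ∀ᵐ p ∂μ.prod ν, P p.1 := by
  rw [ae_iff] at h ⊢
  have heq : {p : α × β | ¬ P p.1} = {x | ¬ P x} ×ˢ (Set.univ : Set β) := by
    ext q; simp
  rw [heq, Measure.prod_prod, h, zero_mul]

lemma key_pointwise (A : Euc n → U → Mat n) (f f0 : Euc n → ℝ → U → ℝ)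
    (Mf Kf : ℕ → ℝ) (x : Euc n) (y : ℝ)
    (hfc : Continuous fun p : ℝ × U => f x p.1 p.2)
    (hlsc : LowerSemicontinuous fun p : ℝ × U => f0 x p.1 p.2)
    (hS6x : ∀ y0 : ℝ, ∀ ε > (0:ℝ), ∃ τ > (0:ℝ), ∀ yt : ℝ, |yt - y0| < τ → ∀ v : U,
        |f x yt v - f x y0 v| < ε ∧ f0 x y0 v - ε < f0 x yt v)
    (hbd : ∀ R : ℕ, ∀ v : U, ∀ y' : ℝ, |y'| ≤ (R:ℝ) →
        |f x y' v| ≤ Mf R ∧ -(Kf R) ≤ f0 x y' v)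
    (hyp_y : CE A f f0 x y = closure (GE A f f0 x y))
    (hyp_ae : ∀ᵐ yt : ℝ ∂volume, CE A f f0 x yt = closure (GE A f f0 x yt)) :
    CE A f f0 x y = ⋂ δ > (0:ℝ), closure (⋃ yt ∈ Metric.ball y δ, GE A f f0 x yt) := by
  apply Set.Subset.antisymm
  · rw [hyp_y]
    exact closure_GE_subset_iInter A f f0 x y
  · intro p hp
    suffices hcl : p ∈ closure (CE A f f0 x y) by
      rw [hyp_y, closure_closure, ← hyp_y] at hcl
      exact hcl
    rw [mem_closure_prod_iff]
    intro V hV hpV ε hε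
    have hε' : 0 < ε/8 := by linarith
    obtain ⟨τ0, hτ0, hτ⟩ := hS6x y (ε/8) hε'
    have hτpos : 0 < min τ0 1 := lt_min hτ0 one_pos
    set τ := min τ0 1 with hτdef
    have hττ0 : τ ≤ τ0 := min_le_left _ _
    have hτ1 : τ ≤ 1 := min_le_right _ _
    set R : ℕ := ⌈|y|⌉₊ + 2 with hR
    have hceil : (|y|) ≤ (⌈|y|⌉₊ : ℝ) := Nat.le_ceil _
    have hRcast : ((⌈|y|⌉₊ : ℝ) + 2) = (R:ℝ) := by rw [hR]; push_cast; ring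
    have hRy : ∀ y' : ℝ, |y' - y| < τ → |y'| ≤ (R:ℝ) := by
      intro y' h
      have h1 : |y'| ≤ |y| + |y' - y| := by
        have := abs_add_le y (y' - y)
        simpa using this
      have h3 : |y' - y| ≤ 1 := le_of_lt (lt_of_lt_of_le h hτ1)
      linarith
    have hyR : |y| ≤ (R:ℝ) := by linarith
    have hyself : |y - y| < τ := by simpa using hτpos
    have hp2 : p ∈ closure (⋃ yt ∈ Metric.ball y τ, GE A f f0 x yt) :=
      Set.mem_iInter₂.1 hp τ hτpos
    obtain ⟨p', hp'mem, hp'V, hp'2, hp'3⟩ :=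
      (mem_closure_prod_iff).1 hp2 V hV hpV (ε/8) hε'
    obtain ⟨yt, hytball, hp'GE⟩ := Set.mem_iUnion₂.1 hp'mem
    have hyty : |yt - y| < τ := by
      rw [mem_ball, Real.dist_eq] at hytball; exact hytball
    obtain ⟨u, hu, hPw, hζ, hζ0⟩ := hp'GE
    have hum : ∀ y' : ℝ, Measurable fun z => f x y' (u z) := fun y' =>
      ((hfc.comp (continuous_const.prodMk continuous_id)).measurable).comp hu
    have hu0m : ∀ y' : ℝ, Measurable fun z => f0 x y' (u z) := fun y' =>
      ((hlsc.comp (continuous_const.prodMk continuous_id)).measurable).comp hu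
    have hfint : ∀ y' : ℝ, |y' - y| < τ →
        Integrable (fun z => f x y' (u z)) (volume.restrict (unitCube n)) := by
      intro y' h
      refine Integrable.mono' (integrable_const (Mf R)) (hum y').aestronglyMeasurable
        (Filter.Eventually.of_forall fun z => ?_)
      rw [Real.norm_eq_abs]
      exact (hbd R (u z) y' (hRy y' h)).1
    have hfclose : ∀ y' : ℝ, |y' - y| < τ →
        |(∫ z in unitCube n, f x y' (u z)) - ∫ z in unitCube n, f x y (u z)| ≤ ε/8 := by
      intro y' h
      rw [← integral_sub (hfint y' h) (hfint y hyself)]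
      have hb := norm_integral_le_of_norm_le_const (μ := volume.restrict (unitCube n))
        (f := fun z => f x y' (u z) - f x y (u z)) (C := ε/8)
        (Filter.Eventually.of_forall fun z => by
          rw [Real.norm_eq_abs]
          exact le_of_lt ((hτ y' (lt_of_lt_of_le h hττ0) (u z)).1))
      rw [measureReal_def, measure_restrict_cube_univ, mul_one, Real.norm_eq_abs] at hb
      exact hb
    by_cases hA : Integrable (fun z => f0 x yt (u z)) (volume.restrict (unitCube n))
    · -- Case A : f0(x, yt, u(·)) integrable
      have hleA : ∀ z : Euc n, f0 x y (u z) ≤ f0 x yt (u z) + ε/8 := fun z => by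
        have := (hτ yt (lt_of_lt_of_le hyty hττ0) (u z)).2
        linarith
      have hf0yint : Integrable (fun z => f0 x y (u z)) (volume.restrict (unitCube n)) := by
        have hbound : Integrable (fun z => |f0 x yt (u z)| + (|Kf R| + ε/8))
            (volume.restrict (unitCube n)) := hA.abs.add (integrable_const _)
        refine Integrable.mono' hbound
          (hu0m y).aestronglyMeasurable (Filter.Eventually.of_forall fun z => ?_)
        rw [Real.norm_eq_abs, abs_le]
        have hK1 := le_abs_self (Kf R)
        have hK2 := abs_nonneg (Kf R)
        constructor
        · have h1 := (hbd R (u z) y hyR).2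
          have h2 := abs_nonneg (f0 x yt (u z))
          linarith
        · have h1 := hleA z
          have h2 := le_abs_self (f0 x yt (u z))
          linarith
      have hInt3 : (∫ z in unitCube n, f0 x y (u z)) ≤ p'.2.2 + ε/8 := by
        have h1 : (∫ z in unitCube n, f0 x y (u z))
            ≤ ∫ z in unitCube n, (f0 x yt (u z) + ε/8) :=
          integral_mono hf0yint (hA.add (integrable_const _)) hleA
        have h2 : (∫ z in unitCube n, (f0 x yt (u z) + ε/8))
            = (∫ z in unitCube n, f0 x yt (u z)) + ε/8 := by
          rw [integral_add hA (integrable_const _), setIntegral_cube_const]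
        linarith [hζ0]
      refine ⟨(p'.1, ∫ z in unitCube n, f x y (u z), p'.2.2 + ε/8), ?_, hp'V, ?_, ?_⟩
      · rw [hyp_y]
        exact subset_closure ⟨u, hu, hPw, rfl, hInt3⟩
      · show |(∫ z in unitCube n, f x y (u z)) - p.2.1| < ε
        have h1 := hfclose yt hyty
        rw [hζ] at hp'2
        calc |(∫ z in unitCube n, f x y (u z)) - p.2.1|
            ≤ |(∫ z in unitCube n, f x y (u z)) - (∫ z in unitCube n, f x yt (u z))|
              + |(∫ z in unitCube n, f x yt (u z)) - p.2.1| := abs_sub_le _ _ _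
          _ < ε := by
              rw [abs_sub_comm] at h1
              linarith
      · show |p'.2.2 + ε/8 - p.2.2| < ε
        have h1 : |p'.2.2 + ε/8 - p.2.2| ≤ |p'.2.2 - p.2.2| + ε/8 := by
          calc |p'.2.2 + ε/8 - p.2.2| = |(p'.2.2 - p.2.2) + ε/8| := by ring_nf
            _ ≤ |p'.2.2 - p.2.2| + |ε/8| := abs_add_le _ _
            _ = |p'.2.2 - p.2.2| + ε/8 := by rw [abs_of_pos hε']
        linarith
    · -- Case B : f0(x, yt, u(·)) not integrable
      rw [integral_undef hA] at hζ0
      obtain ⟨τ2, hτ2pos, hτ2⟩ := hS6x yt 1 one_pos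
      have hbadnull :
          volume {y' : ℝ | ¬ (CE A f f0 x y' = closure (GE A f f0 x y'))} = 0 :=
        ae_iff.1 hyp_ae
      have hsgood : ∃ yt'', (yt'' ∈ Metric.ball yt τ2 ∩ Metric.ball y τ) ∧
          CE A f f0 x yt'' = closure (GE A f f0 x yt'') := by
        by_contra hcon
        push_neg at hcon
        have hsub : (Metric.ball yt τ2 ∩ Metric.ball y τ) ⊆
            {y' : ℝ | ¬ (CE A f f0 x y' = closure (GE A f f0 x y'))} :=
          fun y' hy' => hcon y' hy'
        have h0 := measure_mono_null hsub hbadnull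
        have hpos : 0 < volume (Metric.ball yt τ2 ∩ Metric.ball y τ) :=
          (isOpen_ball.inter isOpen_ball).measure_pos volume
            ⟨yt, mem_ball_self hτ2pos, hytball⟩
        rw [h0] at hpos
        exact lt_irrefl 0 hpos
      obtain ⟨yt'', ⟨hyt''τ2, hyt''yball⟩, hyp''⟩ := hsgood
      have hyt''y : |yt'' - y| < τ := by
        rw [mem_ball, Real.dist_eq] at hyt''yball; exact hyt''yball
      have hyt''τ2' : |yt'' - yt| < τ2 := by
        rw [mem_ball, Real.dist_eq] at hyt''τ2; exact hyt''τ2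
      have hB'' : ¬ Integrable (fun z => f0 x yt'' (u z)) (volume.restrict (unitCube n)) := by
        intro hI
        apply hA
        have hbound : Integrable (fun z => |f0 x yt'' (u z)| + (|Kf R| + 1))
            (volume.restrict (unitCube n)) := hI.abs.add (integrable_const _)
        refine Integrable.mono' hbound
          (hu0m yt).aestronglyMeasurable (Filter.Eventually.of_forall fun z => ?_)
        rw [Real.norm_eq_abs, abs_le]
        have hK1 := le_abs_self (Kf R)
        have hK2 := abs_nonneg (Kf R)
        constructor
        · have h1 := (hbd R (u z) yt (hRy yt hyty)).2
          have h2 := abs_nonneg (f0 x yt'' (u z))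
          linarith
        · have h1 := (hτ2 yt'' hyt''τ2' (u z)).2
          have h2 := le_abs_self (f0 x yt'' (u z))
          linarith
      have hq''CE : ((p'.1, ∫ z in unitCube n, f x yt'' (u z), p'.2.2) : Mat n × ℝ × ℝ)
          ∈ CE A f f0 x yt'' := by
        rw [hyp'']
        refine subset_closure ⟨u, hu, hPw, rfl, ?_⟩
        show (∫ z in unitCube n, f0 x yt'' (u z)) ≤ p'.2.2
        rw [integral_undef hB'']
        exact hζ0
      obtain ⟨v, hv1, hv2, hv3⟩ := hq''CE
      dsimp only at hv1 hv2 hv3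
      refine ⟨(A x v, f x y v, p'.2.2 + ε/8), ⟨v, rfl, rfl, ?_⟩, ?_, ?_, ?_⟩
      · show f0 x y v ≤ p'.2.2 + ε/8
        have h1 := (hτ yt'' (lt_of_lt_of_le hyt''y hττ0) v).2
        linarith
      · show A x v ∈ V
        rw [← hv1]
        exact hp'V
      · show |f x y v - p.2.1| < ε
        have ha := (hτ yt'' (lt_of_lt_of_le hyt''y hττ0) v).1
        have hb := hfclose yt'' hyt''y
        have hc := hfclose yt hyty
        rw [hζ] at hp'2
        have h2 : |f x yt'' v - (∫ z in unitCube n, f x y (u z))| ≤ ε/8 := by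
          rw [← hv2]; exact hb
        have h3 : |(∫ z in unitCube n, f x y (u z)) - (∫ z in unitCube n, f x yt (u z))| ≤ ε/8 := by
          rw [abs_sub_comm]; exact hc
        have h4 : |f x y v - f x yt'' v| < ε/8 := by
          rw [abs_sub_comm]; exact ha
        have t1 := abs_sub_le (f x y v) (f x yt'' v) p.2.1
        have t2 := abs_sub_le (f x yt'' v) (∫ z in unitCube n, f x y (u z)) p.2.1
        have t3 := abs_sub_le (∫ z in unitCube n, f x y (u z))
          (∫ z in unitCube n, f x yt (u z)) p.2.1
        linarith
      · show |p'.2.2 + ε/8 - p.2.2| < ε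
        have h1 : |p'.2.2 + ε/8 - p.2.2| ≤ |p'.2.2 - p.2.2| + ε/8 := by
          calc |p'.2.2 + ε/8 - p.2.2| = |(p'.2.2 - p.2.2) + ε/8| := by ring_nf
            _ ≤ |p'.2.2 - p.2.2| + |ε/8| := abs_add_le _ _
            _ = |p'.2.2 - p.2.2| + ε/8 := by rw [abs_of_pos hε']
        linarith

end MainAux

end Aux

/-- Proposition 3.5: under the additional uniform continuity /
semicontinuity assumption (S6), the Cesari-type condition is equivalent to
`𝓔(x,y) = cl(G𝓔(x,y))` a.e. -/
theorem cesari_equiv_pointwise_closure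
    {n m : ℕ} {U : Type*}
    [TopologicalSpace U] [PolishSpace U] [MeasurableSpace U] [BorelSpace U]
    (Ω : Set (Euc n)) (L l : ℝ) (hl : 0 < l) (hL : l ≤ L)
    (A : Euc n → U → Mat n) (f f0 : Euc n → ℝ → U → ℝ)
    -- (S1)
    (hΩ : IsBoundedDomain Ω) (hC2 : HasC2Boundary Ω)
    -- (S3)
    (hAmeas : ∀ v, ∀ i j, Measurable fun x => A x v i j)
    (hAcont : ∀ x ∈ Ω, Continuous (A x))
    (hAval : ∀ x ∈ Ω, ∀ v, A x v ∈ MSet n L l)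
    (F : Euc n → Euc m) (hF : MemLp F ⊤ (volume.restrict Ω))
    (ω : ℝ → ℝ) (hωc : Continuous ω) (hω0 : ω 0 = 0) (hωnn : ∀ r, 0 ≤ r → 0 ≤ ω r)
    (hAmod : ∀ x ∈ Ω, ∀ x' ∈ Ω, ∀ v, matAbs (A x v - A x' v) ≤ ω ‖F x - F x'‖)
    -- (S4)
    (hfmeas : ∀ y v, Measurable fun x => f x y v)
    (hfcont : ∀ᵐ x ∂volume.restrict Ω, Continuous fun p : ℝ × U => f x p.1 p.2)
    (hfdiff : ∀ᵐ x ∂volume.restrict Ω, ∀ y v, DifferentiableAt ℝ (fun t => f x t v) y)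
    (hfy : ∀ᵐ x ∂volume.restrict Ω, ∀ y v, deriv (fun t => f x t v) y ≤ 0)
    (hfbd : ∀ R > (0:ℝ), ∃ M > (0:ℝ), ∀ᵐ x ∂volume.restrict Ω, ∀ v : U, ∀ y : ℝ, |y| ≤ R →
      |f x y v| + |deriv (fun t => f x t v) y| ≤ M)
    -- (S5)
    (hf0meas : ∀ y v, Measurable fun x => f0 x y v)
    (hf0lsc : ∀ᵐ x ∂volume.restrict Ω, LowerSemicontinuous fun p : ℝ × U => f0 x p.1 p.2)
    (hf0bd : ∀ R > (0:ℝ), ∃ K > (0:ℝ), ∀ᵐ x ∂volume.restrict Ω, ∀ v : U, ∀ y : ℝ, |y| ≤ R →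
      -K ≤ f0 x y v)
    -- (S6)
    (hS6 : ∀ᵐ x ∂volume.restrict Ω, ∀ y : ℝ, ∀ ε > (0:ℝ), ∃ τ > (0:ℝ),
      ∀ yt : ℝ, |yt - y| < τ → ∀ v : U,
        |f x yt v - f x y v| < ε ∧ f0 x y v - ε < f0 x yt v) :
    ((∀ᵐ p : Euc n × ℝ ∂(volume.restrict Ω).prod volume,
        CE A f f0 p.1 p.2 =
          ⋂ δ > (0:ℝ), closure (⋃ yt ∈ Metric.ball p.2 δ, GE A f f0 p.1 yt)) ↔
      (∀ᵐ p : Euc n × ℝ ∂(volume.restrict Ω).prod volume,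
        CE A f f0 p.1 p.2 = closure (GE A f f0 p.1 p.2))) := by
  constructor
  · -- Cesari condition ⟹ pointwise closure
    intro hCes
    have hΩmeas : MeasurableSet Ω := hΩ.1.measurableSet
    have hfst : ∀ᵐ p : Euc n × ℝ ∂(volume.restrict Ω).prod volume, p.1 ∈ Ω :=
      Aux.ae_prod_fst (ae_restrict_mem hΩmeas)
    filter_upwards [hCes, hfst] with p hCeq hxΩ
    refine Set.Subset.antisymm ?_ ?_
    · exact (Aux.CE_subset_GE A f f0 p.1 p.2
        (fun v => (hAval p.1 hxΩ v).1)).trans subset_closure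
    · rw [hCeq]
      exact Aux.closure_GE_subset_iInter A f f0 p.1 p.2
  · -- pointwise closure ⟹ Cesari condition
    intro hPt
    have hMK : ∀ R : ℕ, ∃ MK : ℝ × ℝ, ∀ᵐ x ∂volume.restrict Ω, ∀ v : U, ∀ y' : ℝ,
        |y'| ≤ (R:ℝ) → |f x y' v| ≤ MK.1 ∧ -(MK.2) ≤ f0 x y' v := by
      intro R
      obtain ⟨M, hM, hMae⟩ := hfbd ((R:ℝ)+1) (by positivity)
      obtain ⟨K, hK, hKae⟩ := hf0bd ((R:ℝ)+1) (by positivity)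
      refine ⟨(M, K), ?_⟩
      filter_upwards [hMae, hKae] with x h1 h2 v y' hy'
      have hy1 : |y'| ≤ (R:ℝ)+1 := by linarith
      refine ⟨?_, h2 v y' hy1⟩
      have h3 := h1 v y' hy1
      have h4 := abs_nonneg (deriv (fun t => f x t v) y')
      linarith
    choose MK hMKae using hMK
    have hbd_ae : ∀ᵐ x ∂volume.restrict Ω, ∀ R : ℕ, ∀ v : U, ∀ y' : ℝ,
        |y'| ≤ (R:ℝ) → |f x y' v| ≤ (MK R).1 ∧ -((MK R).2) ≤ f0 x y' v :=
      ae_all_iff.mpr hMKae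
    have hslice : ∀ᵐ x ∂volume.restrict Ω, ∀ᵐ yt : ℝ ∂volume,
        CE A f f0 x yt = closure (GE A f f0 x yt) := Measure.ae_ae_of_ae_prod hPt
    have hBig : ∀ᵐ x ∂volume.restrict Ω,
        ((Continuous fun q : ℝ × U => f x q.1 q.2) ∧
        (LowerSemicontinuous fun q : ℝ × U => f0 x q.1 q.2) ∧
        (∀ y : ℝ, ∀ ε > (0:ℝ), ∃ τ > (0:ℝ), ∀ yt : ℝ, |yt - y| < τ → ∀ v : U,
          |f x yt v - f x y v| < ε ∧ f0 x y v - ε < f0 x yt v) ∧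
        (∀ R : ℕ, ∀ v : U, ∀ y' : ℝ, |y'| ≤ (R:ℝ) →
          |f x y' v| ≤ (MK R).1 ∧ -((MK R).2) ≤ f0 x y' v) ∧
        (∀ᵐ yt : ℝ ∂volume, CE A f f0 x yt = closure (GE A f f0 x yt))) := by
      filter_upwards [hfcont, hf0lsc, hS6, hbd_ae, hslice] with x h1 h2 h3 h4 h5
      exact ⟨h1, h2, h3, h4, h5⟩
    have hfst := Aux.ae_prod_fst (ν := (volume : Measure ℝ)) hBig
    filter_upwards [hfst, hPt] with p hB hyp_y
    obtain ⟨h1, h2, h3, h4, h5⟩ := hB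
    exact Aux.key_pointwise A f f0 (fun R => (MK R).1) (fun R => (MK R).2)
      p.1 p.2 h1 h2 h3 h4 hyp_y h5

end
end

section
/- Let U be a Polish space, g : U → ℝ bounded and continuous, and g⁰ : U → ℝ bounded below and lower semicontinuous. Define E = {(ζ,ζ⁰) ∈ ℝ² : ζ = g(u), ζ⁰ ≥ g⁰(u) for some u ∈ U} and Ẽ = {(ζ,ζ⁰) ∈ ℝ² : ζ = ∫_Z g(u(z)) dz, ζ⁰ ≥ ∫_Z g⁰(u(z)) dz for some measurable u : Z → U}. Then Ẽ is contained in the closed convex hull of E, and hence the closure of Ẽ equals the closed convex hull of E (the reverse inclusion co E ⊆ Ẽ holding by piecewise-constant controls). -/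
open MeasureTheory Filter Topology Metric Set
open scoped BoundedContinuousFunction RealInnerProductSpace

noncomputable section

lemma euc_vol_pi {n : ℕ} (t : Fin n → Set ℝ) (ht : ∀ i, MeasurableSet (t i)) :
    volume {z : Euc n | ∀ i, z i ∈ t i} = ∏ i, volume (t i) := by
  have h := (EuclideanSpace.volume_preserving_symm_measurableEquiv_toLp (Fin n)).measure_preimage
    (s := Set.pi Set.univ t) (MeasurableSet.univ_pi ht).nullMeasurableSet
  rw [← volume_pi_pi t, ← h]
  congr 1
  ext z
  simp [Set.mem_pi]

lemma vol_unitCube {n : ℕ} : volume (unitCube n) = 1 := by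
  have := euc_vol_pi (n := n) (fun _ => Set.Icc (0:ℝ) 1) (fun _ => measurableSet_Icc)
  simpa [unitCube, Real.volume_Icc] using this

lemma meas_eval {n : ℕ} (i : Fin n) : Measurable (fun z : Euc n => z i) :=
  by fun_prop

private lemma partA {n : ℕ} {U : Type*} [TopologicalSpace U] [MeasurableSpace U] [BorelSpace U]
    (g g0 : U → ℝ) (hg : Continuous g) (hgb : ∃ C : ℝ, ∀ v, |g v| ≤ C) :
    {p : ℝ × ℝ | ∃ w : Euc n → U, AEMeasurable w (volume.restrict (unitCube n)) ∧
        IntegrableOn (fun z => g0 (w z)) (unitCube n) ∧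
        p.1 = ∫ z in unitCube n, g (w z) ∧ (∫ z in unitCube n, g0 (w z)) ≤ p.2} ⊆
      closure (convexHull ℝ {p : ℝ × ℝ | ∃ v : U, p.1 = g v ∧ g0 v ≤ p.2}) := by
  set E : Set (ℝ × ℝ) := {p : ℝ × ℝ | ∃ v : U, p.1 = g v ∧ g0 v ≤ p.2} with hE
  rintro ⟨p1, p2⟩ ⟨w, hw, hint0, hp1, hp2⟩
  by_contra hp
  obtain ⟨f, u, hfE, hfp⟩ := geometric_hahn_banach_closed_point
    ((convex_convexHull ℝ E).closure) isClosed_closure hp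
  set a : ℝ := f (1, 0) with ha
  set b : ℝ := f (0, 1) with hb
  have hab : ∀ q : ℝ × ℝ, f q = a * q.1 + b * q.2 := by
    intro q
    have hq : q = q.1 • ((1:ℝ), (0:ℝ)) + q.2 • ((0:ℝ), (1:ℝ)) := by
      ext <;> simp
    rw [hq, map_add, f.map_smul, f.map_smul]
    simp [mul_comm, ha, hb]
  have hEsub : E ⊆ closure (convexHull ℝ E) :=
    (subset_convexHull ℝ E).trans subset_closure
  have hElt : ∀ q ∈ E, f q < u := fun q hq => hfE q (hEsub hq)
  -- b ≤ 0
  have hbneg : b ≤ 0 := by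
    by_contra hbpos
    push_neg at hbpos
    set v := w 0 with hv
    set t : ℝ := max 0 ((u - (a * g v + b * g0 v)) / b) with ht
    have htnn : 0 ≤ t := le_max_left _ _
    have hmem : ((g v, g0 v + t) : ℝ × ℝ) ∈ E := ⟨v, rfl, by simpa using by linarith⟩
    have h1 := hElt _ hmem
    rw [hab] at h1
    simp only at h1
    have h2 : (u - (a * g v + b * g0 v)) / b ≤ t := le_max_right _ _
    rw [div_le_iff₀ hbpos] at h2
    nlinarith
  have hElt' : ∀ v : U, a * g v + b * g0 v < u := by
    intro v
    have := hElt (g v, g0 v) ⟨v, rfl, le_refl _⟩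
    rwa [hab] at this
  -- integrability of g ∘ w
  obtain ⟨C, hC⟩ := hgb
  have hfin : IsFiniteMeasure (volume.restrict (unitCube n)) := by
    constructor
    rw [Measure.restrict_apply_univ, vol_unitCube]
    exact ENNReal.one_lt_top
  have hmg : AEStronglyMeasurable (fun z => g (w z)) (volume.restrict (unitCube n)) :=
    (hg.measurable.comp_aemeasurable hw).aestronglyMeasurable
  have hintg : IntegrableOn (fun z => g (w z)) (unitCube n) := by
    refine Integrable.mono' (integrable_const C) hmg ?_
    filter_upwards with z using hC (w z)
  -- integral inequality
  have hkey : a * (∫ z in unitCube n, g (w z)) + b * (∫ z in unitCube n, g0 (w z)) ≤ u := by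
    have h1 : ∫ z in unitCube n, (a * g (w z) + b * g0 (w z)) ≤
        ∫ z in unitCube n, (u : ℝ) := by
      refine integral_mono (Integrable.add (hintg.const_mul a) (hint0.const_mul b))
        (integrable_const u) ?_
      intro z
      exact le_of_lt (hElt' (w z))
    rw [integral_const, measureReal_restrict_apply_univ, measureReal_def, vol_unitCube] at h1
    simp only [ENNReal.toReal_one, one_smul] at h1
    rw [integral_add (hintg.const_mul a) (hint0.const_mul b),
      integral_const_mul, integral_const_mul] at h1
    exact h1
  have hfpval : f (p1, p2) = a * p1 + b * p2 := hab _
  have : a * p1 + b * p2 ≤ u := by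
    have hb2 : b * p2 ≤ b * (∫ z in unitCube n, g0 (w z)) :=
      mul_le_mul_of_nonpos_left hp2 hbneg
    have hp1' : p1 = ∫ z in unitCube n, g (w z) := hp1
    calc a * p1 + b * p2 ≤ a * (∫ z in unitCube n, g (w z)) +
          b * (∫ z in unitCube n, g0 (w z)) := by rw [hp1']; linarith
      _ ≤ u := hkey
  rw [hfpval] at hfp
  linarith

private lemma pieceB {n : ℕ} (hn : 0 < n) {U : Type*} [MeasurableSpace U]
    (m : ℕ) (hm : 0 < m) (b : ℕ → ℝ) (hb : ∀ k, 0 ≤ b k) (hbz : ∀ k, m ≤ k → b k = 0)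
    (hs : ∑ k ∈ Finset.range m, b k = 1) (uu : ℕ → U) :
    ∃ w : Euc n → U, Measurable w ∧
      ∀ h : U → ℝ, IntegrableOn (fun z => h (w z)) (unitCube n) ∧
        ∫ z in unitCube n, h (w z) = ∑ k ∈ Finset.range m, b k * h (uu k) := by
  classical
  set i0 : Fin n := ⟨0, hn⟩ with hi0
  set c : ℕ → ℝ := fun k => ∑ j ∈ Finset.range k, b j with hc
  have hcadd : ∀ k, c (k + 1) = c k + b k := fun k => Finset.sum_range_succ b k
  have hcmono : Monotone c := by
    intro k l hkl
    exact Finset.sum_le_sum_of_subset_of_nonneg (Finset.range_subset_range.2 hkl) (fun j _ _ => hb j)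
  have hc0 : c 0 = 0 := by simp [hc]
  have hc1 : ∀ k, m ≤ k → c k = 1 := by
    intro k hk
    rw [hc, ← hs]
    symm
    apply Finset.sum_subset (Finset.range_subset_range.2 hk)
    intro j _ hj
    exact hbz j (by simpa using hj)
  have hcle1 : ∀ k, c k ≤ 1 := by
    intro k
    rcases le_or_gt m k with h | h
    · exact (hc1 k h).le
    · calc c k ≤ c m := hcmono h.le
        _ = 1 := hc1 m le_rfl
  have hcnn : ∀ k, 0 ≤ c k := fun k => Finset.sum_nonneg fun j _ => hb j
  set idx : ℝ → ℕ := fun r => if h : ∃ k, r < c (k + 1) then Nat.find h else m with hidx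
  have find_le : ∀ {r : ℝ} (h : ∃ k, r < c (k + 1)), Nat.find h ≤ m - 1 := by
    intro r h
    refine Nat.find_le ?_
    have hr1 : r < 1 := lt_of_lt_of_le (Nat.find_spec h) (hcle1 _)
    show r < c (m - 1 + 1)
    have hm1 : m - 1 + 1 = m := by omega
    rw [hm1, hc1 m le_rfl]
    exact hr1
  have idx_le : ∀ r, idx r ≤ m := by
    intro r
    rw [hidx]
    dsimp only
    split_ifs with h
    · have := find_le h; omega
    · exact le_rfl
  have idx_mono : Monotone idx := by
    intro r r' hrr
    rw [hidx]
    dsimp only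
    split_ifs
    · exact Nat.find_le (lt_of_le_of_lt hrr (Nat.find_spec ‹∃ k, r' < c (k + 1)›))
    · have := find_le ‹∃ k, r < c (k + 1)›; omega
    · obtain ⟨k, hk⟩ := ‹∃ k, r' < c (k + 1)›
      exact absurd ⟨k, lt_of_le_of_lt hrr hk⟩ ‹¬∃ k, r < c (k + 1)›
    · exact le_rfl
  have idx_eq : ∀ k r, c k ≤ r → r < c (k + 1) → idx r = k := by
    intro k r h1 h2
    have hex : ∃ j, r < c (j + 1) := ⟨k, h2⟩
    rw [hidx]
    dsimp only
    rw [dif_pos hex]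
    refine le_antisymm (Nat.find_le h2) ?_
    rw [Nat.le_find_iff]
    intro j hj hcon
    exact absurd hcon (not_lt.2 ((hcmono (Nat.succ_le_of_lt hj)).trans h1))
  have idx_lt : ∀ r : ℝ, 0 ≤ r → r < 1 → idx r < m ∧ c (idx r) ≤ r ∧ r < c (idx r + 1) := by
    intro r hr0 hr1
    have hex : ∃ j, r < c (j + 1) := ⟨m - 1, by
      have hm1 : m - 1 + 1 = m := by omega
      rw [hm1, hc1 m le_rfl]; exact hr1⟩
    have hidxr : idx r = Nat.find hex := by rw [hidx]; exact dif_pos hex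
    refine ⟨?_, ?_, ?_⟩
    · rw [hidxr]; have := find_le hex; omega
    · rw [hidxr]
      rcases Nat.eq_zero_or_pos (Nat.find hex) with h0 | hpos
      · rw [h0, hc0]; exact hr0
      · obtain ⟨j, hj⟩ := Nat.exists_eq_succ_of_ne_zero (Nat.pos_iff_ne_zero.1 hpos)
        rw [hj]
        have := Nat.find_min hex (by omega : j < Nat.find hex)
        exact not_lt.1 this
    · rw [hidxr]; exact Nat.find_spec hex
  -- the control
  refine ⟨fun z => uu (idx (z i0)), ?_, ?_⟩
  · exact measurable_from_top.comp (idx_mono.measurable.comp (meas_eval i0))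
  intro h
  set S : ℕ → Set (Euc n) :=
    fun k => {z | ∀ i, z i ∈ (if i = i0 then Ico (c k) (c (k + 1)) else Icc (0:ℝ) 1)} with hS
  have hSmeas : ∀ k, MeasurableSet (S k) := by
    intro k
    have : S k = ⋂ i, (fun z : Euc n => z i) ⁻¹'
        (if i = i0 then Ico (c k) (c (k + 1)) else Icc (0:ℝ) 1) := by
      ext z; simp [hS, Set.mem_iInter]
    rw [this]
    exact MeasurableSet.iInter fun i => (meas_eval i)
      (by split_ifs; exacts [measurableSet_Ico, measurableSet_Icc])
  have hSvol : ∀ k, volume (S k) = ENNReal.ofReal (b k) := by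
    intro k
    rw [hS]
    rw [euc_vol_pi _ (fun i => by split_ifs; exacts [measurableSet_Ico, measurableSet_Icc])]
    rw [Fintype.prod_eq_single i0 (fun i hi => by rw [if_neg hi]; simp [Real.volume_Icc])]
    rw [if_pos rfl, Real.volume_Ico]
    congr 1
    have := hcadd k
    linarith
  have hwS : ∀ k, ∀ z ∈ S k, idx (z i0) = k := by
    intro k z hz
    have := hz i0
    rw [if_pos rfl] at this
    exact idx_eq k _ this.1 this.2
  have hSdisj' : ∀ k l, k < l → Disjoint (S k) (S l) := by
    intro k l hkl
    rw [Set.disjoint_left]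
    intro z hzk hzl
    have h1 := hzk i0; rw [if_pos rfl] at h1
    have h2 := hzl i0; rw [if_pos rfl] at h2
    have : c (k + 1) ≤ c l := hcmono hkl
    have := h1.2
    have := h2.1
    linarith
  have hSdisj : (↑(Finset.range m) : Set ℕ).Pairwise (Function.onFun Disjoint S) := by
    intro k _ l _ hkl
    rcases Nat.lt_or_ge k l with h | h
    · exact hSdisj' k l h
    · exact (hSdisj' l k (by omega)).symm
  set B := ⋃ k ∈ Finset.range m, S k with hB
  have hBsub : B ⊆ unitCube n := by
    intro z hz
    simp only [hB, Set.mem_iUnion, Finset.mem_range] at hz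
    obtain ⟨k, hk, hzk⟩ := hz
    intro i
    have hti := hzk i
    rcases eq_or_ne i i0 with hii | hii
    · subst hii
      rw [if_pos rfl] at hti
      exact ⟨le_trans (hcnn k) hti.1, le_trans hti.2.le (hcle1 _)⟩
    · rw [if_neg hii] at hti
      exact hti
  have hmemB : ∀ z ∈ unitCube n, z i0 < 1 → z ∈ B := by
    intro z hz hzlt
    have h0 : 0 ≤ z i0 := (hz i0).1
    obtain ⟨h1, h2, h3⟩ := idx_lt (z i0) h0 hzlt
    simp only [hB, Set.mem_iUnion, Finset.mem_range]
    refine ⟨idx (z i0), h1, ?_⟩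
    intro i
    split_ifs with hii
    · rw [hii]; exact ⟨h2, h3⟩
    · exact hz i
  have hNul : volume (unitCube n \ B) = 0 := by
    have hsub : unitCube n \ B ⊆
        {z : Euc n | ∀ i, z i ∈ (if i = i0 then ({1} : Set ℝ) else (univ : Set ℝ))} := by
      rintro z ⟨hzc, hzB⟩
      intro i
      split_ifs with hii
      · rw [hii]
        by_contra hne
        have : z i0 < 1 := lt_of_le_of_ne (hzc i0).2 hne
        exact hzB (hmemB z hzc this)
      · trivial
    refine measure_mono_null hsub ?_
    rw [euc_vol_pi _ (fun i => by split_ifs <;> [exact measurableSet_singleton 1; exact MeasurableSet.univ])]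
    refine Finset.prod_eq_zero (Finset.mem_univ i0) ?_
    rw [if_pos rfl]
    simp
  have hBae : B =ᵐ[volume] unitCube n := by
    rw [MeasureTheory.ae_eq_set]
    constructor
    · rw [Set.diff_eq_empty.2 hBsub]; exact measure_empty
    · exact hNul
  have hwm : Measurable (fun z : Euc n => h (uu (idx (z i0)))) :=
    (measurable_from_top (f := fun k => h (uu k))).comp (idx_mono.measurable.comp (meas_eval i0))
  have hIk : ∀ k ∈ Finset.range m, IntegrableOn (fun z => h (uu (idx (z i0)))) (S k) := by
    intro k _
    have heq : EqOn (fun _ : Euc n => h (uu k)) (fun z => h (uu (idx (z i0)))) (S k) := by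
      intro z hz
      simp only [hwS k z hz]
    refine IntegrableOn.congr_fun ?_ heq (hSmeas k)
    refine integrableOn_const ?_
    rw [hSvol k]
    exact ENNReal.ofReal_lt_top.ne
  have hIB : IntegrableOn (fun z => h (uu (idx (z i0)))) B := by
    rw [hB]
    exact integrableOn_finset_iUnion.2 hIk
  have hIcube : IntegrableOn (fun z => h (uu (idx (z i0)))) (unitCube n) := by
    rwa [IntegrableOn, ← Measure.restrict_congr_set hBae]
  refine ⟨hIcube, ?_⟩
  rw [← setIntegral_congr_set hBae, hB,
    integral_biUnion_finset _ (fun k _ => hSmeas k) hSdisj hIk]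
  refine Finset.sum_congr rfl ?_
  intro k hk
  rw [setIntegral_congr_fun (hSmeas k) (fun z hz => by simp only [hwS k z hz] :
    EqOn (fun z => h (uu (idx (z i0)))) (fun _ => h (uu k)) (S k))]
  rw [setIntegral_const, measureReal_def, hSvol k, ENNReal.toReal_ofReal (hb k), smul_eq_mul]

private lemma partB {n : ℕ} (hn : 0 < n) {U : Type*} [MeasurableSpace U]
    (g g0 : U → ℝ) :
    convexHull ℝ {p : ℝ × ℝ | ∃ v : U, p.1 = g v ∧ g0 v ≤ p.2} ⊆
      {p : ℝ × ℝ | ∃ w : Euc n → U, AEMeasurable w (volume.restrict (unitCube n)) ∧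
        IntegrableOn (fun z => g0 (w z)) (unitCube n) ∧
        p.1 = ∫ z in unitCube n, g (w z) ∧ (∫ z in unitCube n, g0 (w z)) ≤ p.2} := by
  classical
  intro p hp
  rw [convexHull_eq] at hp
  obtain ⟨ι, t, W, zf, hW0, hW1, hzE, hcm⟩ := hp
  set m := t.card with hmdef
  have hm : 0 < m := by
    rcases Finset.eq_empty_or_nonempty t with h | h
    · rw [h] at hW1; simp at hW1
    · exact Finset.card_pos.2 h
  set v : {x // x ∈ t} → U := fun i => Classical.choose (hzE i i.2) with hv
  have hv1 : ∀ i : {x // x ∈ t}, (zf i).1 = g (v i) :=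
    fun i => (Classical.choose_spec (hzE i i.2)).1
  have hv2 : ∀ i : {x // x ∈ t}, g0 (v i) ≤ (zf i).2 :=
    fun i => (Classical.choose_spec (hzE i i.2)).2
  set e : Fin m → {x // x ∈ t} := fun k => t.equivFin.symm k with he
  set b : ℕ → ℝ := fun k => if hk : k < m then W (e ⟨k, hk⟩) else 0 with hbdef
  set uu : ℕ → U := fun k => if hk : k < m then v (e ⟨k, hk⟩) else v (e ⟨0, hm⟩) with huu
  have hb : ∀ k, 0 ≤ b k := by
    intro k
    rw [hbdef]; dsimp only
    split_ifs with hk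
    · exact hW0 _ (e ⟨k, hk⟩).2
    · exact le_rfl
  have hbz : ∀ k, m ≤ k → b k = 0 := by
    intro k hk
    rw [hbdef]; dsimp only
    rw [dif_neg (by omega)]
  have key : ∀ h : U → ℝ, ∑ k ∈ Finset.range m, b k * h (uu k)
      = ∑ i ∈ t.attach, W ↑i * h (v i) := by
    intro h
    rw [← Fin.sum_univ_eq_sum_range (fun k => b k * h (uu k)) m]
    rw [← Finset.univ_eq_attach, ← Equiv.sum_comp t.equivFin.symm
      (fun i : {x // x ∈ t} => W ↑i * h (v i))]
    refine Finset.sum_congr rfl ?_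
    intro k _
    simp only [hbdef, huu, dif_pos k.isLt, Fin.eta, he]
  have hs : ∑ k ∈ Finset.range m, b k = 1 := by
    have := key (fun _ => 1)
    simp only [mul_one] at this
    rw [this, Finset.sum_attach t W, hW1]
  obtain ⟨w, hw, hspec⟩ := pieceB hn m hm b hb hbz hs uu
  have hp' : ∑ i ∈ t, W i • zf i = p := by
    rw [← Finset.centerMass_eq_of_sum_1 t zf hW1]; exact hcm
  have hp1 : p.1 = ∑ i ∈ t.attach, W ↑i * g (v i) := by
    rw [← hp', Prod.fst_sum, ← Finset.sum_attach t (fun i => (W i • zf i).1)]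
    refine Finset.sum_congr rfl ?_
    intro i _
    rw [Prod.smul_fst, smul_eq_mul, hv1 i]
  have hp2 : ∑ i ∈ t.attach, W ↑i * g0 (v i) ≤ p.2 := by
    have h1 : ∑ i ∈ t.attach, W ↑i * g0 (v i) ≤ ∑ i ∈ t.attach, W ↑i * (zf ↑i).2 :=
      Finset.sum_le_sum fun i _ => mul_le_mul_of_nonneg_left (hv2 i) (hW0 _ i.2)
    have h2 : ∑ i ∈ t.attach, W ↑i * (zf ↑i).2 = p.2 := by
      rw [Finset.sum_attach t (fun i => W i * (zf i).2), ← hp', Prod.snd_sum]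
      refine Finset.sum_congr rfl ?_
      intro i _
      rw [Prod.smul_snd, smul_eq_mul]
    linarith
  refine ⟨w, hw.aemeasurable, (hspec g0).1, ?_, ?_⟩
  · rw [(hspec g).2, key g, hp1]
  · rw [(hspec g0).2, key g0]
    exact hp2

/-- Proposition 3.4, key step: `Ẽ` is contained in the closed convex hull
of `E`, and the closure of `Ẽ` equals the closed convex hull of `E`. -/
theorem relaxed_set_eq_closed_convex_hull
    {n : ℕ} (hn : 0 < n) {U : Type*}
    [TopologicalSpace U] [PolishSpace U] [MeasurableSpace U] [BorelSpace U]
    (g g0 : U → ℝ)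
    (hg : Continuous g) (hgb : ∃ C : ℝ, ∀ v, |g v| ≤ C)
    (hg0 : LowerSemicontinuous g0) (hg0b : ∃ K : ℝ, ∀ v, K ≤ g0 v) :
    {p : ℝ × ℝ | ∃ w : Euc n → U, AEMeasurable w (volume.restrict (unitCube n)) ∧
        IntegrableOn (fun z => g0 (w z)) (unitCube n) ∧
        p.1 = ∫ z in unitCube n, g (w z) ∧ (∫ z in unitCube n, g0 (w z)) ≤ p.2} ⊆
      closure (convexHull ℝ {p : ℝ × ℝ | ∃ v : U, p.1 = g v ∧ g0 v ≤ p.2}) ∧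
    closure {p : ℝ × ℝ | ∃ w : Euc n → U, AEMeasurable w (volume.restrict (unitCube n)) ∧
        IntegrableOn (fun z => g0 (w z)) (unitCube n) ∧
        p.1 = ∫ z in unitCube n, g (w z) ∧ (∫ z in unitCube n, g0 (w z)) ≤ p.2} =
      closure (convexHull ℝ {p : ℝ × ℝ | ∃ v : U, p.1 = g v ∧ g0 v ≤ p.2}) := by
  have hA := partA (n := n) g g0 hg hgb
  have hB := partB hn g g0
  refine ⟨hA, ?_⟩
  apply Subset.antisymm
  · exact closure_minimal hA isClosed_closure
  · exact closure_mono hB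


end
end
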